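/- Let q > 0 and let S be a q-isolated core of G. Then every connected component of the subgraph of G induced by S is itself a q-isolated core of G. -/
import Mathlib


open SimpleGraph

variable {V : Type*}

/-- The edge boundary `∂S` of a vertex set `S`: the set of edges of `G` with one endpoint
in `S` and the other endpoint outside `S`. -/
def edgeBdry (G : SimpleGraph V) (S : Set V) : Set (Sym2 V) :=
  {e | e ∈ G.edgeSet ∧ ∃ x ∈ S, ∃ y ∉ S, e = s(x, y)}

/-- The `q`-isolation `Δ_q S := q·|S| − |∂S|` of a vertex set `S`. -/
noncomputable def isolation (G : SimpleGraph V) (q : ℝ) (S : Set V) : ℝ :=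
  q * (S.ncard : ℝ) - ((edgeBdry G S).ncard : ℝ)

/-- A finite vertex set `S` is a `q`-isolated core if `Δ_q S > Δ_q A` for every
proper subset `A ⊊ S`. -/
def IsIsolatedCore (G : SimpleGraph V) (q : ℝ) (S : Set V) : Prop :=
  S.Finite ∧ ∀ A : Set V, A ⊂ S → isolation G q A < isolation G q S

/-- `A_q`: the union of all `q`-isolated cores of `G`. -/
def coreUnion (G : SimpleGraph V) (q : ℝ) : Set V :=
  ⋃₀ {S : Set V | IsIsolatedCore G q S}

/-- A `q`-island: a connected component of (the subgraph of `G` induced by) `A_q`,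
characterised as a nonempty connected subset of `A_q` which is closed under
adjacency within `A_q`. -/
def IsIsland (G : SimpleGraph V) (q : ℝ) (C : Set V) : Prop :=
  C ⊆ coreUnion G q ∧ (G.induce C).Connected ∧
    ∀ x ∈ C, ∀ y ∈ coreUnion G q, G.Adj x y → y ∈ C

/-- The anchored expansion constant
`i(G) = lim_{n→∞} inf { |∂K|/|K| : o ∈ K ⊆ G connected, n ≤ |K| < ∞ }`;
since the infima are nondecreasing in `n`, the limit equals the supremum over `n`. -/
noncomputable def anchoredExpansion (G : SimpleGraph V) (o : V) : ℝ :=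
  ⨆ n : ℕ, sInf {r : ℝ | ∃ K : Set V, o ∈ K ∧ K.Finite ∧ (G.induce K).Connected ∧
    n ≤ K.ncard ∧ r = ((edgeBdry G K).ncard : ℝ) / (K.ncard : ℝ)}

/-- The set of children of a vertex `x` in the tree rooted at `o`: the neighbours of `x`
at larger graph distance from the root. -/
def children (G : SimpleGraph V) (o x : V) : Set V :=
  {y | G.Adj x y ∧ G.dist o y = G.dist o x + 1}

lemma edgeBdry_finite {G : SimpleGraph V} (hloc : ∀ v : V, (G.neighborSet v).Finite)
    {S : Set V} (hS : S.Finite) : (edgeBdry G S).Finite := by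
  have hsub : edgeBdry G S ⊆ ⋃ x ∈ S, G.incidenceSet x := by
    rintro e ⟨he, x, hx, y, hy, rfl⟩
    exact Set.mem_biUnion hx ⟨he, Sym2.mem_mk_left x y⟩
  classical
  refine (hS.biUnion fun x _ => ?_).subset hsub
  have h1 : Finite (G.neighborSet x) := (hloc x).to_subtype
  have h2 : Finite (G.incidenceSet x) :=
    Finite.of_equiv _ (G.incidenceSetEquivNeighborSet x).symm
  exact Set.finite_coe_iff.mp h2

lemma edgeBdry_union_sep {G : SimpleGraph V} {A W : Set V}
    (hsep : ∀ a ∈ A, ∀ w ∈ W, ¬ G.Adj a w) :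
    edgeBdry G (A ∪ W) = edgeBdry G A ∪ edgeBdry G W := by
  ext e
  constructor
  · rintro ⟨he, x, hx, y, hy, rfl⟩
    rcases hx with hx | hx
    · exact Or.inl ⟨he, x, hx, y, fun h => hy (Or.inl h), rfl⟩
    · exact Or.inr ⟨he, x, hx, y, fun h => hy (Or.inr h), rfl⟩
  · rintro (⟨he, x, hx, y, hy, rfl⟩ | ⟨he, x, hx, y, hy, rfl⟩)
    · refine ⟨he, x, Or.inl hx, y, ?_, rfl⟩
      rintro (h | h)
      · exact hy h
      · exact hsep x hx y h ((SimpleGraph.mem_edgeSet G).mp he)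
    · refine ⟨he, x, Or.inr hx, y, ?_, rfl⟩
      rintro (h | h)
      · exact hsep y h x hx ((SimpleGraph.mem_edgeSet G).mp he).symm
      · exact hy h

lemma edgeBdry_disjoint_sep {G : SimpleGraph V} {A W : Set V} (hd : Disjoint A W)
    (hsep : ∀ a ∈ A, ∀ w ∈ W, ¬ G.Adj a w) :
    Disjoint (edgeBdry G A) (edgeBdry G W) := by
  rw [Set.disjoint_left]
  rintro e ⟨he, x, hx, y, hy, rfl⟩ ⟨he', x', hx', y', hy', hee⟩
  rw [Sym2.eq_iff] at hee
  rcases hee with ⟨h1, h2⟩ | ⟨h1, h2⟩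
  · exact (Set.disjoint_left.mp hd hx) (h1 ▸ hx')
  · exact hsep x hx y (h2 ▸ hx') ((SimpleGraph.mem_edgeSet G).mp he)

lemma isolation_add {G : SimpleGraph V} (hloc : ∀ v : V, (G.neighborSet v).Finite)
    (q : ℝ) {A W : Set V} (hA : A.Finite) (hW : W.Finite) (hd : Disjoint A W)
    (hsep : ∀ a ∈ A, ∀ w ∈ W, ¬ G.Adj a w) :
    isolation G q (A ∪ W) = isolation G q A + isolation G q W := by
  rw [isolation, isolation, isolation, edgeBdry_union_sep hsep,
    Set.ncard_union_eq hd hA hW,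
    Set.ncard_union_eq (edgeBdry_disjoint_sep hd hsep)
      (edgeBdry_finite hloc hA) (edgeBdry_finite hloc hW)]
  push_cast
  ring

/-- Let `q > 0` and let `S` be a `q`-isolated core of `G`. Then every connected component
of the subgraph of `G` induced by `S` is itself a `q`-isolated core of `G`. -/
theorem stmt4 (G : SimpleGraph V) (hloc : ∀ v : V, (G.neighborSet v).Finite)
    (q : ℝ) (hq : 0 < q) (S : Set V) (hS : IsIsolatedCore G q S)
    (c : (G.induce S).ConnectedComponent) :
    IsIsolatedCore G q (Subtype.val '' c.supp) := by
  obtain ⟨hSfin, hScore⟩ := hS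
  set C : Set V := Subtype.val '' c.supp with hCdef
  have hCS : C ⊆ S := by rintro x ⟨⟨x, hx⟩, _, rfl⟩; exact hx
  have hCfin : C.Finite := hSfin.subset hCS
  have hclosed : ∀ x ∈ C, ∀ y ∈ S, G.Adj x y → y ∈ C := by
    rintro x ⟨⟨x, hxS⟩, hxc, rfl⟩ y hyS hadj
    refine ⟨⟨y, hyS⟩, ?_, rfl⟩
    rw [SimpleGraph.ConnectedComponent.mem_supp_iff] at hxc ⊢
    rw [← hxc]
    refine SimpleGraph.ConnectedComponent.sound ?_
    exact SimpleGraph.Adj.reachable (by simpa using hadj.symm)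
  set W : Set V := S \ C with hWdef
  have hWfin : W.Finite := hSfin.subset Set.diff_subset
  have hCW : C ∪ W = S := Set.union_diff_cancel hCS
  have hsepC : ∀ a ∈ C, ∀ w ∈ W, ¬ G.Adj a w := by
    intro a ha w hw hadj
    exact hw.2 (hclosed a ha w hw.1 hadj)
  refine ⟨hCfin, ?_⟩
  intro A hA
  have hAC : A ⊆ C := hA.subset
  have hAfin : A.Finite := hCfin.subset hAC
  have hdAW : Disjoint A W := (Set.disjoint_sdiff_right).mono_left hAC
  have hdCW : Disjoint C W := Set.disjoint_sdiff_right
  have hsepA : ∀ a ∈ A, ∀ w ∈ W, ¬ G.Adj a w := fun a ha => hsepC a (hAC ha)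
  obtain ⟨x, hxC, hxA⟩ := Set.exists_of_ssubset hA
  have hss : A ∪ W ⊂ S := by
    refine ssubset_of_subset_not_subset
      (Set.union_subset (hAC.trans hCS) Set.diff_subset) ?_
    intro hsub
    rcases hsub (hCS hxC) with h | h
    · exact hxA h
    · exact h.2 hxC
  have key := hScore (A ∪ W) hss
  rw [isolation_add hloc q hAfin hWfin hdAW hsepA] at key
  have hSiso : isolation G q S = isolation G q C + isolation G q W := by
    rw [← hCW]; exact isolation_add hloc q hCfin hWfin hdCW hsepC
  rw [hSiso] at key
  linarith
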